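/- Let β₁, β₂, κ ∈ ℝ and G₁, G₂ > 0. There exists a constant C > 0, depending only on β₁, β₂, κ, G₁, G₂, such that for every integer N ≥ 1 and every pair of infinitely differentiable functions u, F : ℝ → ℝ satisfying (i) |u^{(i)}(t)| ≤ G₁ and |F^{(i)}(t)| ≤ G₂ for all integers i ≥ 0 and all t ∈ [0,1], and (ii) β₁·u(t) + β₂·∫_0^t u(s) ds + κ·∫_0^t ∫_0^ξ u(s) ds dξ = F(t) for all t ∈ [0,1], the following holds: defining u_n = (1/n!)·∫_0^1 u^{(n)}(s) ds and F_n = (1/n!)·∫_0^1 F^{(n)}(s) ds for 0 ≤ n ≤ N, one has for all t ∈ [0,1] the bound |β₁·Σ_{n=0}^{N} B_n(t)·u_n + β₂·Σ_{m=0}^{N} Σ_{n=0}^{N} B_m(t)·P_{m,n}·u_n + κ·Σ_{m=0}^{N} Σ_{n=0}^{N} B_m(t)·(P²)_{m,n}·u_n − Σ_{n=0}^{N} B_n(t)·F_n| ≤ C·(2π)^{−N}. -/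

import Mathlib

open scoped BigOperators

/-- The `n`-th Bernoulli polynomial evaluated at `t : ℝ`. -/
noncomputable def B (n : ℕ) (t : ℝ) : ℝ :=
  Polynomial.aeval t (Polynomial.bernoulli n)

/-- The `(N+1) × (N+1)` matrix `P` whose only nonzero entries are
`P 0 j = -B (j+1) 0 / (j+1)` for `0 ≤ j ≤ N-1` and `P (j+1) j = 1/(j+1)` for `0 ≤ j ≤ N-1`. -/
noncomputable def Pmat (N : ℕ) : Matrix (Fin (N + 1)) (Fin (N + 1)) ℝ :=
  Matrix.of fun i j =>
    if (i : ℕ) = 0 then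
      (if (j : ℕ) < N then -(B ((j : ℕ) + 1) 0) / ((j : ℕ) + 1) else 0)
    else if (i : ℕ) = (j : ℕ) + 1 then 1 / ((j : ℕ) + 1) else 0

set_option maxHeartbeats 1000000

open scoped BigOperators
open intervalIntegral Real Set Complex


lemma B_eq_bernoulliFun (n : ℕ) (t : ℝ) : B n t = bernoulliFun n t := by
  simp [B, bernoulliFun, Polynomial.aeval_def, Polynomial.eval_map]

lemma B_zero (t : ℝ) : B 0 t = 1 := by simp [B, Polynomial.bernoulli_zero]

lemma B_one (t : ℝ) : B 1 t = t - 1/2 := by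
  simp [B, Polynomial.bernoulli, Finset.sum_range_succ, bernoulli_one]
  ring

lemma B_continuous (n : ℕ) : Continuous (B n) := by
  exact (Polynomial.bernoulli n).continuous_aeval

lemma hasDerivAt_B (k : ℕ) (x : ℝ) :
    HasDerivAt (B (k+1)) ((k+1) * B k x) x := by
  simp only [funext fun t => B_eq_bernoulliFun (k+1) t, B_eq_bernoulliFun]
  simpa using hasDerivAt_bernoulliFun (k+1) x

lemma B_endpoints {k : ℕ} (hk : k ≠ 1) : B k 1 = B k 0 := by
  rw [B_eq_bernoulliFun, B_eq_bernoulliFun]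
  exact bernoulliFun_endpoints_eq_of_ne_one hk

lemma hasSum_int_inv_sq : HasSum (fun n : ℤ => 1 / (n : ℝ) ^ 2) (π ^ 2 / 3) := by
  have h0 : HasSum (fun n : ℕ => 1 / (n : ℝ) ^ 2) (π ^ 2 / 6) := hasSum_zeta_two
  have h1 : HasSum (fun n : ℕ => 1 / ((n : ℝ) + 1) ^ 2) (π ^ 2 / 6) := by
    have h2 : HasSum (fun n : ℕ => 1 / ((n + 1 : ℕ) : ℝ) ^ 2) (π ^ 2 / 6) := by
      apply (hasSum_nat_add_iff (f := fun n : ℕ => 1 / ((n : ℕ) : ℝ) ^ 2) 1).mpr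
      simpa using h0
    convert h2 using 2 with n
    push_cast
    ring
  have h3 : HasSum (fun n : ℕ => (fun m : ℤ => 1 / (m : ℝ) ^ 2) ((n : ℕ) : ℤ)) (π ^ 2 / 6) := by
    have he : (fun n : ℕ => (fun m : ℤ => 1 / (m : ℝ) ^ 2) ((n : ℕ) : ℤ))
        = fun n : ℕ => 1 / (n : ℝ) ^ 2 := by
      funext n; push_cast; ring
    rw [he]; exact h0
  have h4 : HasSum (fun n : ℕ => (fun m : ℤ => 1 / (m : ℝ) ^ 2) (-((n : ℕ) + 1)))
      (π ^ 2 / 6) := by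
    have he : (fun n : ℕ => (fun m : ℤ => 1 / (m : ℝ) ^ 2) (-((n : ℕ) + 1)))
        = fun n : ℕ => 1 / ((n : ℝ) + 1) ^ 2 := by
      funext n; push_cast; ring
    rw [he]; exact h1
  have h5 := HasSum.of_nat_of_neg_add_one (f := fun m : ℤ => 1 / (m : ℝ) ^ 2) h3 h4
  have heq : π ^ 2 / 3 = π ^ 2 / 6 + π ^ 2 / 6 := by ring
  rw [heq]; exact h5

lemma B_abs_le {k : ℕ} (hk : 2 ≤ k) {x : ℝ} (hx : x ∈ Set.Icc (0:ℝ) 1) :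
    |B k x| ≤ 4 * (k.factorial : ℝ) / (2 * π) ^ k := by
  have h := hasSum_one_div_pow_mul_fourier_mul_bernoulliFun hk hx
  set f : ℤ → ℂ := fun n => 1 / (n : ℂ) ^ k * fourier n (x : UnitAddCircle) with hf
  have hbound : ∀ n : ℤ, ‖f n‖ ≤ 1 / (n : ℝ) ^ 2 := by
    intro n
    rcases eq_or_ne n 0 with rfl | hn
    · simp [hf, zero_pow (by omega : k ≠ 0)]
    · have h1 : ‖f n‖ = 1 / |(n : ℝ)| ^ k := by
        rw [hf]
        rw [norm_mul]
        rw [norm_div, norm_one, norm_pow]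
        have : ‖fourier n (x : UnitAddCircle)‖ = 1 := by
          rw [fourier_apply]; exact Circle.norm_coe _
        rw [this, mul_one]
        congr 1
        rw [Complex.norm_intCast]
      rw [h1]
      have hn1 : (1:ℝ) ≤ |(n:ℝ)| := by
        rw [← Int.cast_abs]; exact_mod_cast Int.one_le_abs hn
      have : |(n:ℝ)| ^ 2 ≤ |(n:ℝ)| ^ k := pow_le_pow_right₀ hn1 hk
      rw [div_le_div_iff₀ (by positivity) (by positivity), one_mul, one_mul]
      calc (n:ℝ)^2 = |(n:ℝ)|^2 := by rw [_root_.sq_abs]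
        _ ≤ |(n:ℝ)|^k := this
  have hgsum := hasSum_int_inv_sq
  have hs : Summable (fun n : ℤ => ‖f n‖) :=
    Summable.of_nonneg_of_le (fun n => norm_nonneg _) hbound hgsum.summable
  have hnorm : ‖(-(2 * (π:ℂ) * I) ^ k / (k.factorial : ℂ) * (bernoulliFun k x : ℂ))‖
      ≤ π ^ 2 / 3 := by
    rw [← h.tsum_eq]
    calc ‖∑' n, f n‖ ≤ ∑' n, ‖f n‖ := norm_tsum_le_tsum_norm hs
      _ ≤ ∑' n : ℤ, 1 / (n : ℝ) ^ 2 := Summable.tsum_le_tsum hbound hs hgsum.summable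
      _ = π ^ 2 / 3 := hgsum.tsum_eq
  have hnormval : ‖(-(2 * (π:ℂ) * I) ^ k / (k.factorial : ℂ) * (bernoulliFun k x : ℂ))‖
      = (2 * π) ^ k / (k.factorial : ℝ) * |B k x| := by
    rw [norm_mul, norm_div, norm_neg, norm_pow]
    rw [Complex.norm_real, Real.norm_eq_abs, ← B_eq_bernoulliFun]
    congr 2
    · rw [norm_mul, Complex.norm_I, mul_one, norm_mul, Complex.norm_real]
      simp [Real.norm_eq_abs, _root_.abs_of_nonneg Real.pi_nonneg]
    · simp [Complex.norm_natCast]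
  rw [hnormval] at hnorm
  have hpi : π ^ 2 / 3 ≤ 4 := by nlinarith [Real.pi_lt_d2, Real.pi_gt_three]
  have hfact : (0:ℝ) < (k.factorial : ℝ) := by positivity
  have h2pi : (0:ℝ) < (2 * π) ^ k := by positivity
  have h5 : (2*π)^k * |B k x| ≤ 4 * (k.factorial : ℝ) := by
    have h6 := hnorm.trans hpi
    rw [div_mul_eq_mul_div, div_le_iff₀ hfact] at h6
    linarith
  rw [le_div_iff₀ h2pi]
  linarith

noncomputable def coeff (g : ℝ → ℝ) (n : ℕ) : ℝ :=
  (1 / (n.factorial : ℝ)) * ∫ s in (0:ℝ)..1, iteratedDeriv n g s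

lemma EM_formula (g : ℝ → ℝ)
    (hD : ∀ n x, HasDerivAt (iteratedDeriv n g) (iteratedDeriv (n+1) g x) x)
    (hC : ∀ n, Continuous (iteratedDeriv n g)) (N : ℕ) (t : ℝ) :
    g t - ∑ n ∈ Finset.range (N+1), B n t * coeff g n
      = ((∫ s in (0:ℝ)..t, (B (N+1) t - B (N+1) (t-s)) * iteratedDeriv (N+1) g s)
        + ∫ s in t..(1:ℝ), (B (N+1) t - B (N+1) (t-s+1)) * iteratedDeriv (N+1) g s)
          / ((N+1).factorial : ℝ) := by
  induction N with
  | zero =>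
    have hg' : ∀ x, HasDerivAt g (iteratedDeriv 1 g x) x := by
      intro x; have := hD 0 x; rwa [iteratedDeriv_zero] at this
    have hint : IntervalIntegrable (iteratedDeriv 1 g) MeasureTheory.volume 0 t :=
      (hC 1).intervalIntegrable _ _
    have hint2 : IntervalIntegrable (iteratedDeriv 1 g) MeasureTheory.volume t 1 :=
      (hC 1).intervalIntegrable _ _
    have ibp1 : ∫ s in (0:ℝ)..t, s * iteratedDeriv 1 g s
        = t * g t - 0 * g 0 - ∫ s in (0:ℝ)..t, 1 * g s :=
      intervalIntegral.integral_mul_deriv_eq_deriv_mul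
        (fun x _ => hasDerivAt_id x) (fun x _ => hg' x)
        (continuous_const.intervalIntegrable _ _) hint
    have ibp2 : ∫ s in t..(1:ℝ), (s - 1) * iteratedDeriv 1 g s
        = (1 - 1) * g 1 - (t - 1) * g t - ∫ s in t..(1:ℝ), 1 * g s :=
      intervalIntegral.integral_mul_deriv_eq_deriv_mul
        (fun x _ => (hasDerivAt_id x).sub_const 1) (fun x _ => hg' x)
        (continuous_const.intervalIntegrable _ _) hint2
    have hker1 : ∀ s : ℝ, (B 1 t - B 1 (t - s)) = s := by
      intro s; rw [B_one, B_one]; ring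
    have hker2 : ∀ s : ℝ, (B 1 t - B 1 (t - s + 1)) = s - 1 := by
      intro s; rw [B_one, B_one]; ring
    have hadj : (∫ s in (0:ℝ)..t, g s) + ∫ s in t..(1:ℝ), g s = ∫ s in (0:ℝ)..1, g s :=
      intervalIntegral.integral_add_adjacent_intervals
        ((hC 0).congr (by simp [iteratedDeriv_zero]) |>.intervalIntegrable _ _)
        ((hC 0).congr (by simp [iteratedDeriv_zero]) |>.intervalIntegrable _ _)
    simp only [hker1, hker2]
    rw [ibp1, ibp2]
    have hs : ∑ n ∈ Finset.range (0+1), B n t * coeff g n = ∫ s in (0:ℝ)..1, g s := by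
      simp [Finset.sum_range_one, B_zero, coeff, iteratedDeriv_zero, Nat.factorial_zero]
    rw [hs, ← hadj]
    norm_num
    ring
  | succ N IH =>
    set D := fun n => iteratedDeriv n g with hDdef
    -- derivative facts for the kernels
    have hK2 : ∀ s : ℝ, HasDerivAt (fun s => B (N+2) t - B (N+2) (t - s))
        (((N:ℝ)+2) * B (N+1) (t - s)) s := by
      intro s
      have h1 : HasDerivAt (fun s : ℝ => t - s) (-1) s := by
        simpa using (hasDerivAt_id s).const_sub t
      have h2 := (hasDerivAt_B (N+1) (t - s)).comp s h1
      have h3 := h2.const_sub (B (N+2) t)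
      exact h3.congr_deriv (by push_cast; ring)
    have hK3 : ∀ s : ℝ, HasDerivAt (fun s => B (N+2) t - B (N+2) (t - s + 1))
        (((N:ℝ)+2) * B (N+1) (t - s + 1)) s := by
      intro s
      have h1 : HasDerivAt (fun s : ℝ => t - s + 1) (-1) s := by
        simpa using ((hasDerivAt_id s).const_sub t).add_const 1
      have h2 := (hasDerivAt_B (N+1) (t - s + 1)).comp s h1
      have h3 := h2.const_sub (B (N+2) t)
      exact h3.congr_deriv (by push_cast; ring)
    have hcont1 : Continuous (fun s : ℝ => B (N+1) (t - s)) :=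
      (B_continuous (N+1)).comp (continuous_const.sub continuous_id)
    have hcont2 : Continuous (fun s : ℝ => B (N+1) (t - s + 1)) :=
      ((B_continuous (N+1)).comp ((continuous_const.sub continuous_id).add continuous_const))
    -- integration by parts on both pieces
    have ibp1 : ∫ s in (0:ℝ)..t, (B (N+2) t - B (N+2) (t-s)) * D (N+2) s
        = (B (N+2) t - B (N+2) (t - t)) * D (N+1) t
          - (B (N+2) t - B (N+2) (t - 0)) * D (N+1) 0
          - ∫ s in (0:ℝ)..t, (((N:ℝ)+2) * B (N+1) (t - s)) * D (N+1) s :=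
      intervalIntegral.integral_mul_deriv_eq_deriv_mul
        (fun x _ => hK2 x) (fun x _ => hD (N+1) x)
        ((continuous_const.mul hcont1).intervalIntegrable _ _)
        ((hC (N+2)).intervalIntegrable _ _)
    have ibp2 : ∫ s in t..(1:ℝ), (B (N+2) t - B (N+2) (t-s+1)) * D (N+2) s
        = (B (N+2) t - B (N+2) (t - 1 + 1)) * D (N+1) 1
          - (B (N+2) t - B (N+2) (t - t + 1)) * D (N+1) t
          - ∫ s in t..(1:ℝ), (((N:ℝ)+2) * B (N+1) (t - s + 1)) * D (N+1) s :=
      intervalIntegral.integral_mul_deriv_eq_deriv_mul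
        (fun x _ => hK3 x) (fun x _ => hD (N+1) x)
        ((continuous_const.mul hcont2).intervalIntegrable _ _)
        ((hC (N+2)).intervalIntegrable _ _)
    -- pull constants out
    have hpull1 : ∫ s in (0:ℝ)..t, (((N:ℝ)+2) * B (N+1) (t - s)) * D (N+1) s
        = ((N:ℝ)+2) * ∫ s in (0:ℝ)..t, B (N+1) (t - s) * D (N+1) s := by
      rw [← intervalIntegral.integral_const_mul]
      congr 1; funext s; ring
    have hpull2 : ∫ s in t..(1:ℝ), (((N:ℝ)+2) * B (N+1) (t - s + 1)) * D (N+1) s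
        = ((N:ℝ)+2) * ∫ s in t..(1:ℝ), B (N+1) (t - s + 1) * D (N+1) s := by
      rw [← intervalIntegral.integral_const_mul]
      congr 1; funext s; ring
    -- decompose the IH integrands
    have hsplit1 : ∫ s in (0:ℝ)..t, (B (N+1) t - B (N+1) (t-s)) * D (N+1) s
        = B (N+1) t * (∫ s in (0:ℝ)..t, D (N+1) s)
          - ∫ s in (0:ℝ)..t, B (N+1) (t - s) * D (N+1) s := by
      rw [← intervalIntegral.integral_const_mul, ← intervalIntegral.integral_sub
        (f := fun s => B (N+1) t * D (N+1) s) (g := fun s => B (N+1) (t - s) * D (N+1) s)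
        ((continuous_const.mul (hC (N+1))).intervalIntegrable _ _)
        ((hcont1.mul (hC (N+1))).intervalIntegrable _ _)]
      congr 1; funext s; ring
    have hsplit2 : ∫ s in t..(1:ℝ), (B (N+1) t - B (N+1) (t-s+1)) * D (N+1) s
        = B (N+1) t * (∫ s in t..(1:ℝ), D (N+1) s)
          - ∫ s in t..(1:ℝ), B (N+1) (t - s + 1) * D (N+1) s := by
      rw [← intervalIntegral.integral_const_mul, ← intervalIntegral.integral_sub
        (f := fun s => B (N+1) t * D (N+1) s) (g := fun s => B (N+1) (t - s + 1) * D (N+1) s)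
        ((continuous_const.mul (hC (N+1))).intervalIntegrable _ _)
        ((hcont2.mul (hC (N+1))).intervalIntegrable _ _)]
      congr 1; funext s; ring
    have hadj : (∫ s in (0:ℝ)..t, D (N+1) s) + ∫ s in t..(1:ℝ), D (N+1) s
        = ∫ s in (0:ℝ)..1, D (N+1) s :=
      intervalIntegral.integral_add_adjacent_intervals
        ((hC (N+1)).intervalIntegrable _ _) ((hC (N+1)).intervalIntegrable _ _)
    have hend : B (N+2) (t - 1 + 1) = B (N+2) t := by norm_num
    have hend0 : B (N+2) (t - 0) = B (N+2) t := by norm_num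
    have hendpt : B (N+2) 1 = B (N+2) 0 := B_endpoints (by omega)
    have hcoeff : (∫ s in (0:ℝ)..1, D (N+1) s) = ((N+1).factorial : ℝ) * coeff g (N+1) := by
      rw [coeff]
      have : ((N+1).factorial : ℝ) ≠ 0 := Nat.cast_ne_zero.mpr (Nat.factorial_ne_zero _)
      field_simp
      rfl
    -- now assemble
    have goal1 : g t - ∑ n ∈ Finset.range (N+1), B n t * coeff g n
        = ((∫ s in (0:ℝ)..t, (B (N+1) t - B (N+1) (t-s)) * D (N+1) s)
          + ∫ s in t..(1:ℝ), (B (N+1) t - B (N+1) (t-s+1)) * D (N+1) s)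
            / ((N+1).factorial : ℝ) := IH
    have hfac1 : ((N+1).factorial : ℝ) ≠ 0 := Nat.cast_ne_zero.mpr (Nat.factorial_ne_zero _)
    have hfac2 : ((N+2).factorial : ℝ) = ((N:ℝ)+2) * ((N+1).factorial : ℝ) := by
      rw [show N + 2 = (N+1) + 1 from rfl, Nat.factorial_succ]
      push_cast; ring
    have hS1 : (∫ s in (0:ℝ)..t, D (N+1) s)
        = ((N+1).factorial : ℝ) * coeff g (N+1) - ∫ s in t..(1:ℝ), D (N+1) s := by
      rw [← hcoeff, ← hadj]; ring
    rw [hsplit1, hsplit2, hS1] at goal1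
    rw [Finset.sum_range_succ, show N + 1 + 1 = N + 2 from rfl]
    rw [ibp1, ibp2, hpull1, hpull2, hfac2, hend, hend0]
    have hK2t : B (N+2) (t - t) = B (N+2) 0 := by norm_num
    have hK3t : B (N+2) (t - t + 1) = B (N+2) 1 := by norm_num
    rw [hK2t, hK3t, hendpt]
    have hre : g t - (∑ n ∈ Finset.range (N+1), B n t * coeff g n
        + B (N+1) t * coeff g (N+1))
        = (g t - ∑ n ∈ Finset.range (N+1), B n t * coeff g n)
          - B (N+1) t * coeff g (N+1) := by ring
    rw [hre, goal1]
    field_simp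
    ring

lemma smooth_hD (g : ℝ → ℝ) (hg : ContDiff ℝ ((⊤ : ℕ∞) : WithTop ℕ∞) g) :
    ∀ n x, HasDerivAt (iteratedDeriv n g) (iteratedDeriv (n+1) g x) x := by
  intro n x
  have hdiff : Differentiable ℝ (iteratedDeriv n g) :=
    hg.differentiable_iteratedDeriv n (by exact_mod_cast WithTop.coe_lt_top _)
  rw [iteratedDeriv_succ]
  exact (hdiff x).hasDerivAt

lemma smooth_hC (g : ℝ → ℝ) (hg : ContDiff ℝ ((⊤ : ℕ∞) : WithTop ℕ∞) g) :
    ∀ n, Continuous (iteratedDeriv n g) := fun n =>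
  hg.continuous_iteratedDeriv n (by exact_mod_cast le_top)

lemma EM_bound (g : ℝ → ℝ) (G : ℝ) (hg : ContDiff ℝ ((⊤ : ℕ∞) : WithTop ℕ∞) g)
    (hbd : ∀ i : ℕ, ∀ x ∈ Set.Icc (0:ℝ) 1, |iteratedDeriv i g x| ≤ G)
    {N : ℕ} (hN : 1 ≤ N) {t : ℝ} (ht : t ∈ Set.Icc (0:ℝ) 1) :
    |g t - ∑ n ∈ Finset.range (N+1), B n t * coeff g n| ≤ 2 * G * (2*π)^(-(N:ℤ)) := by
  obtain ⟨ht0, ht1⟩ := ht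
  have hG : 0 ≤ G := le_trans (abs_nonneg _) (hbd 0 0 ⟨le_refl _, zero_le_one⟩)
  rw [EM_formula g (smooth_hD g hg) (smooth_hC g hg) N t]
  set M : ℝ := 4 * ((N+1).factorial : ℝ) / (2*π)^(N+1) with hMdef
  have hMnonneg : 0 ≤ M := by positivity
  have hMb : ∀ y ∈ Set.Icc (0:ℝ) 1, |B (N+1) y| ≤ M := fun y hy =>
    B_abs_le (by omega) hy
  have hBt : |B (N+1) t| ≤ M := hMb t ⟨ht0, ht1⟩
  have bound1 : ‖∫ s in (0:ℝ)..t, (B (N+1) t - B (N+1) (t-s)) * iteratedDeriv (N+1) g s‖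
      ≤ 2*M*G * |t - 0| := by
    apply intervalIntegral.norm_integral_le_of_norm_le_const
    intro s hs
    rw [Set.uIoc_of_le ht0] at hs
    obtain ⟨hs0, hst⟩ := hs
    have hsmem : s ∈ Set.Icc (0:ℝ) 1 := ⟨le_of_lt hs0, hst.trans ht1⟩
    have htsmem : t - s ∈ Set.Icc (0:ℝ) 1 :=
      ⟨by linarith, by linarith⟩
    rw [Real.norm_eq_abs, abs_mul]
    calc |B (N+1) t - B (N+1) (t-s)| * |iteratedDeriv (N+1) g s|
        ≤ (|B (N+1) t| + |B (N+1) (t-s)|) * G := by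
          apply mul_le_mul (abs_sub _ _) (hbd (N+1) s hsmem) (abs_nonneg _)
          positivity
      _ ≤ (M + M) * G := by
          apply mul_le_mul_of_nonneg_right _ hG
          exact add_le_add hBt (hMb _ htsmem)
      _ = 2*M*G := by ring
  have bound2 : ‖∫ s in t..(1:ℝ), (B (N+1) t - B (N+1) (t-s+1)) * iteratedDeriv (N+1) g s‖
      ≤ 2*M*G * |1 - t| := by
    apply intervalIntegral.norm_integral_le_of_norm_le_const
    intro s hs
    rw [Set.uIoc_of_le ht1] at hs
    obtain ⟨hs0, hst⟩ := hs
    have hsmem : s ∈ Set.Icc (0:ℝ) 1 := ⟨ht0.trans (le_of_lt hs0), hst⟩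
    have htsmem : t - s + 1 ∈ Set.Icc (0:ℝ) 1 := ⟨by linarith, by linarith⟩
    rw [Real.norm_eq_abs, abs_mul]
    calc |B (N+1) t - B (N+1) (t-s+1)| * |iteratedDeriv (N+1) g s|
        ≤ (|B (N+1) t| + |B (N+1) (t-s+1)|) * G := by
          apply mul_le_mul (abs_sub _ _) (hbd (N+1) s hsmem) (abs_nonneg _)
          positivity
      _ ≤ (M + M) * G := by
          apply mul_le_mul_of_nonneg_right _ hG
          exact add_le_add hBt (hMb _ htsmem)
      _ = 2*M*G := by ring
  rw [Real.norm_eq_abs] at bound1 bound2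
  rw [_root_.abs_of_nonneg (by linarith : (0:ℝ) ≤ t - 0)] at bound1
  rw [_root_.abs_of_nonneg (by linarith : (0:ℝ) ≤ 1 - t)] at bound2
  have hfacpos : (0:ℝ) < ((N+1).factorial : ℝ) := by positivity
  have hstep : |((∫ s in (0:ℝ)..t, (B (N+1) t - B (N+1) (t-s)) * iteratedDeriv (N+1) g s)
        + ∫ s in t..(1:ℝ), (B (N+1) t - B (N+1) (t-s+1)) * iteratedDeriv (N+1) g s)
          / ((N+1).factorial : ℝ)|
      ≤ 2*M*G / ((N+1).factorial : ℝ) := by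
    rw [abs_div, _root_.abs_of_pos hfacpos]
    gcongr
    calc |(∫ s in (0:ℝ)..t, (B (N+1) t - B (N+1) (t-s)) * iteratedDeriv (N+1) g s)
          + ∫ s in t..(1:ℝ), (B (N+1) t - B (N+1) (t-s+1)) * iteratedDeriv (N+1) g s|
        ≤ 2*M*G * (t-0) + 2*M*G * (1-t) := (abs_add_le _ _).trans (add_le_add bound1 bound2)
      _ = 2*M*G := by ring
  refine hstep.trans ?_
  have hpi : (0:ℝ) < π := Real.pi_pos
  have h2pi : (0:ℝ) < 2*π := by linarith
  have hzpow : (2*π : ℝ)^(-(N:ℤ)) = ((2*π)^N)⁻¹ := by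
    rw [zpow_neg, zpow_natCast]
  rw [hzpow, hMdef]
  have hval : 2 * (4 * ((N+1).factorial : ℝ) / (2*π)^(N+1)) * G / ((N+1).factorial : ℝ)
      = 8 * G / ((2*π)^N * (2*π)) := by
    rw [pow_succ]
    field_simp
    ring
  rw [hval]
  have hX : (0:ℝ) < (2*π)^N := pow_pos h2pi N
  rw [div_le_iff₀ (by positivity : (0:ℝ) < (2*π)^N * (2*π))]
  have hexp : 2 * G * ((2*π)^N)⁻¹ * ((2*π)^N * (2*π)) = 2 * G * (2*π) := by
    field_simp
  rw [hexp]
  nlinarith [mul_nonneg hG (le_of_lt hX), Real.pi_gt_three, hG]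

noncomputable def Iu (u : ℝ → ℝ) : ℝ → ℝ := fun t => ∫ s in (0:ℝ)..t, u s

lemma Iu_hasDerivAt (u : ℝ → ℝ) (hu : Continuous u) (x : ℝ) :
    HasDerivAt (Iu u) (u x) x :=
  (hu.integral_hasStrictDerivAt 0 x).hasDerivAt

lemma Iu_deriv (u : ℝ → ℝ) (hu : Continuous u) : deriv (Iu u) = u :=
  funext fun x => (Iu_hasDerivAt u hu x).deriv

lemma Iu_contDiff (u : ℝ → ℝ) (hu : ContDiff ℝ ((⊤ : ℕ∞) : WithTop ℕ∞) u) : ContDiff ℝ ((⊤ : ℕ∞) : WithTop ℕ∞) (Iu u) := by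
  rw [contDiff_infty_iff_deriv]
  refine ⟨fun x => (Iu_hasDerivAt u hu.continuous x).differentiableAt, ?_⟩
  rw [Iu_deriv u hu.continuous]
  exact hu

lemma Iu_iteratedDeriv_succ (u : ℝ → ℝ) (hu : Continuous u) (n : ℕ) :
    iteratedDeriv (n+1) (Iu u) = iteratedDeriv n u := by
  rw [iteratedDeriv_succ', Iu_deriv u hu]

lemma Iu_zero (u : ℝ → ℝ) : Iu u 0 = 0 := intervalIntegral.integral_same

lemma Iu_coeff_succ (u : ℝ → ℝ) (hu : Continuous u) (n : ℕ) :
    coeff (Iu u) (n+1) = coeff u n / ((n:ℝ)+1) := by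
  rw [coeff, coeff, Iu_iteratedDeriv_succ u hu n, Nat.factorial_succ]
  push_cast
  have h1 : ((n:ℝ)+1) ≠ 0 := by positivity
  have h2 : ((n.factorial : ℝ)) ≠ 0 := Nat.cast_ne_zero.mpr (Nat.factorial_ne_zero _)
  rw [one_div, one_div, mul_inv, div_eq_mul_inv]
  ring

lemma Iu_bound (u : ℝ → ℝ) (hu : ContDiff ℝ ((⊤ : ℕ∞) : WithTop ℕ∞) u) (G : ℝ)
    (hbd : ∀ i : ℕ, ∀ x ∈ Set.Icc (0:ℝ) 1, |iteratedDeriv i u x| ≤ G) :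
    ∀ i : ℕ, ∀ x ∈ Set.Icc (0:ℝ) 1, |iteratedDeriv i (Iu u) x| ≤ G := by
  intro i x hx
  cases i with
  | zero =>
    rw [iteratedDeriv_zero]
    obtain ⟨hx0, hx1⟩ := hx
    have : ‖∫ s in (0:ℝ)..x, u s‖ ≤ G * |x - 0| := by
      apply intervalIntegral.norm_integral_le_of_norm_le_const
      intro s hs
      rw [Set.uIoc_of_le hx0] at hs
      exact (Real.norm_eq_abs _) ▸ hbd 0 s ⟨le_of_lt hs.1, hs.2.trans hx1⟩
        |>.trans_eq' (by rw [iteratedDeriv_zero])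
    rw [Real.norm_eq_abs, _root_.abs_of_nonneg (by linarith : (0:ℝ) ≤ x - 0)] at this
    calc |Iu u x| ≤ G * (x - 0) := this
      _ ≤ G * 1 := by
          apply mul_le_mul_of_nonneg_left (by linarith)
          exact le_trans (abs_nonneg _) (hbd 0 0 ⟨le_refl _, zero_le_one⟩)
      _ = G := mul_one G
  | succ n =>
    rw [Iu_iteratedDeriv_succ u hu.continuous n]
    exact hbd n x hx

lemma key0 (u : ℝ → ℝ) (hu : ContDiff ℝ ((⊤ : ℕ∞) : WithTop ℕ∞) u) (G : ℝ)
    (hbd : ∀ i : ℕ, ∀ x ∈ Set.Icc (0:ℝ) 1, |iteratedDeriv i u x| ≤ G)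
    {N : ℕ} (hN : 1 ≤ N) :
    |∑ j ∈ Finset.range N, (-(B (j+1) 0) / ((j:ℝ)+1)) * coeff u j - coeff (Iu u) 0|
      ≤ 2*G*(2*π)^(-(N:ℤ)) := by
  have hEM := EM_bound (Iu u) G (Iu_contDiff u hu) (Iu_bound u hu G hbd) hN
    (t := 0) ⟨le_refl _, zero_le_one⟩
  have hsum : ∑ n ∈ Finset.range (N+1), B n 0 * coeff (Iu u) n
      = coeff (Iu u) 0 + ∑ j ∈ Finset.range N, B (j+1) 0 * coeff (Iu u) (j+1) := by
    rw [Finset.sum_range_succ', B_zero]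
    ring
  have h1 : ∑ j ∈ Finset.range N, (-(B (j+1) 0) / ((j:ℝ)+1)) * coeff u j
      = - ∑ j ∈ Finset.range N, B (j+1) 0 * coeff (Iu u) (j+1) := by
    rw [← Finset.sum_neg_distrib]
    apply Finset.sum_congr rfl
    intro j hj
    rw [Iu_coeff_succ u hu.continuous j]
    have : ((j:ℝ)+1) ≠ 0 := by positivity
    field_simp
  have h2 : ∑ j ∈ Finset.range N, (-(B (j+1) 0) / ((j:ℝ)+1)) * coeff u j - coeff (Iu u) 0
      = Iu u 0 - ∑ n ∈ Finset.range (N+1), B n 0 * coeff (Iu u) n := by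
    rw [h1, hsum, Iu_zero]
    ring
  rw [h2]
  exact hEM

noncomputable def Pe (N i j : ℕ) : ℝ :=
  if i = 0 then (if j < N then -(B (j+1) 0) / ((j:ℝ)+1) else 0)
  else if i = j+1 then 1/((j:ℝ)+1) else 0

lemma Prow (N : ℕ) (a : ℕ → ℝ) (m : ℕ) (hm : m ≤ N) :
    ∑ n ∈ Finset.range (N+1), Pe N m n * a n
      = if m = 0 then ∑ j ∈ Finset.range N, (-(B (j+1) 0) / ((j:ℝ)+1)) * a j
        else a (m-1) / (m:ℝ) := by
  rcases Nat.eq_zero_or_pos m with rfl | hm0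
  · rw [if_pos rfl]
    rw [Finset.sum_range_succ]
    have hPeN : Pe N 0 N = 0 := by simp [Pe]
    rw [hPeN, zero_mul, add_zero]
    apply Finset.sum_congr rfl
    intro j hj
    rw [Finset.mem_range] at hj
    simp [Pe, hj]
  · rw [if_neg (by omega)]
    obtain ⟨j, rfl⟩ : ∃ j, m = j + 1 := ⟨m - 1, by omega⟩
    rw [Finset.sum_eq_single j]
    · simp only [Pe, if_neg (by omega : ¬ j + 1 = 0), if_pos rfl]
      rw [Nat.add_sub_cancel]
      push_cast
      ring
    · intro n hn hne
      have h1 : ¬ (j + 1 = n + 1) := by omega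
      simp [Pe, h1, if_neg (by omega : ¬ j + 1 = 0)]
      exact fun h => absurd h.symm hne
    · intro h
      exact absurd (Finset.mem_range.mpr (by omega)) h

lemma Psum (N : ℕ) (t : ℝ) (a : ℕ → ℝ) :
    ∑ m ∈ Finset.range (N+1), ∑ n ∈ Finset.range (N+1), B m t * Pe N m n * a n
      = B 0 t * (∑ j ∈ Finset.range N, (-(B (j+1) 0) / ((j:ℝ)+1)) * a j)
        + ∑ j ∈ Finset.range N, B (j+1) t * (a j / ((j:ℝ)+1)) := by
  have hrow : ∀ m ∈ Finset.range (N+1),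
      (∑ n ∈ Finset.range (N+1), B m t * Pe N m n * a n)
        = B m t * (if m = 0 then ∑ j ∈ Finset.range N, (-(B (j+1) 0) / ((j:ℝ)+1)) * a j
            else a (m-1) / (m:ℝ)) := by
    intro m hm
    rw [Finset.mem_range] at hm
    rw [← Prow N a m (by omega), Finset.mul_sum]
    apply Finset.sum_congr rfl
    intro n _
    ring
  rw [Finset.sum_congr rfl hrow, Finset.sum_range_succ']
  simp only [if_pos rfl, if_neg (Nat.succ_ne_zero _)]
  rw [add_comm]
  congr 1
  apply Finset.sum_congr rfl
  intro j _
  rw [Nat.add_sub_cancel]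
  push_cast
  ring


lemma Pmat_eq_Pe (N : ℕ) (m n : Fin (N+1)) : Pmat N m n = Pe N (m:ℕ) (n:ℕ) := rfl

lemma fin_double_conv (N : ℕ) (t : ℝ) (a : ℕ → ℝ) :
    (∑ m : Fin (N + 1), ∑ n : Fin (N + 1), B (m : ℕ) t * Pmat N m n * a (n : ℕ))
      = ∑ m ∈ Finset.range (N+1), ∑ n ∈ Finset.range (N+1), B m t * Pe N m n * a n := by
  calc (∑ m : Fin (N + 1), ∑ n : Fin (N + 1), B (m : ℕ) t * Pmat N m n * a (n : ℕ))
      = ∑ m : Fin (N + 1), ∑ n ∈ Finset.range (N+1), B (m:ℕ) t * Pe N (m:ℕ) n * a n :=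
        Finset.sum_congr rfl (fun m _ =>
          Fin.sum_univ_eq_sum_range (fun n => B (m:ℕ) t * Pe N (m:ℕ) n * a n) (N+1))
    _ = _ := Fin.sum_univ_eq_sum_range
        (fun m => ∑ n ∈ Finset.range (N+1), B m t * Pe N m n * a n) (N+1)

lemma fin_sq_conv (N : ℕ) (t : ℝ) (a : ℕ → ℝ) (b : ℕ → ℝ)
    (hb : ∀ k : Fin (N+1), (∑ n : Fin (N+1), Pmat N k n * a (n:ℕ)) = b (k:ℕ)) :
    (∑ m : Fin (N + 1), ∑ n : Fin (N + 1), B (m : ℕ) t * (Pmat N ^ 2) m n * a (n : ℕ))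
      = ∑ m ∈ Finset.range (N+1), ∑ k ∈ Finset.range (N+1), B m t * Pe N m k * b k := by
  have h1 : ∀ m : Fin (N+1),
      (∑ n : Fin (N + 1), B (m : ℕ) t * (Pmat N ^ 2) m n * a (n : ℕ))
        = ∑ k : Fin (N+1), B (m:ℕ) t * Pmat N m k * b (k:ℕ) := by
    intro m
    simp only [pow_two, Matrix.mul_apply]
    calc ∑ n : Fin (N+1), B (m:ℕ) t * (∑ k : Fin (N+1), Pmat N m k * Pmat N k n) * a (n:ℕ)
        = ∑ n : Fin (N+1), ∑ k : Fin (N+1),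
            B (m:ℕ) t * Pmat N m k * (Pmat N k n * a (n:ℕ)) := by
          apply Finset.sum_congr rfl; intro n _
          rw [Finset.mul_sum, Finset.sum_mul]
          apply Finset.sum_congr rfl; intro k _; ring
      _ = ∑ k : Fin (N+1), ∑ n : Fin (N+1),
            B (m:ℕ) t * Pmat N m k * (Pmat N k n * a (n:ℕ)) := Finset.sum_comm
      _ = ∑ k : Fin (N+1), B (m:ℕ) t * Pmat N m k * b (k:ℕ) := by
          apply Finset.sum_congr rfl; intro k _
          rw [← Finset.mul_sum, hb k]
  rw [Finset.sum_congr rfl (fun m _ => h1 m)]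
  exact fin_double_conv N t b

noncomputable def bfun (N : ℕ) (u : ℝ → ℝ) : ℕ → ℝ := fun k =>
  if k = 0 then (∑ j ∈ Finset.range N, (-(B (j+1) 0) / ((j:ℝ)+1)) * coeff u j)
  else coeff u (k-1) / (k:ℝ)

lemma bfun_zero (N : ℕ) (u : ℝ → ℝ) :
    bfun N u 0 = ∑ j ∈ Finset.range N, (-(B (j+1) 0) / ((j:ℝ)+1)) * coeff u j := if_pos rfl

lemma bfun_succ (N : ℕ) (u : ℝ → ℝ) (hu : Continuous u) (j : ℕ) :
    bfun N u (j+1) = coeff (Iu u) (j+1) := by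
  rw [bfun, if_neg (Nat.succ_ne_zero j), Nat.add_sub_cancel, Iu_coeff_succ u hu j]
  push_cast
  ring

theorem Bm_truncation_error (β₁ β₂ κ G₁ G₂ : ℝ) (hG₁ : 0 < G₁) (hG₂ : 0 < G₂) :
    ∃ C : ℝ, 0 < C ∧
      ∀ N : ℕ, 1 ≤ N →
        ∀ u F : ℝ → ℝ, ContDiff ℝ (⊤ : ℕ∞) u → ContDiff ℝ (⊤ : ℕ∞) F →
          (∀ i : ℕ, ∀ t ∈ Set.Icc (0:ℝ) 1, |iteratedDeriv i u t| ≤ G₁) →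
          (∀ i : ℕ, ∀ t ∈ Set.Icc (0:ℝ) 1, |iteratedDeriv i F t| ≤ G₂) →
          (∀ t ∈ Set.Icc (0:ℝ) 1,
            β₁ * u t + β₂ * (∫ s in (0:ℝ)..t, u s)
              + κ * (∫ ξ in (0:ℝ)..t, ∫ s in (0:ℝ)..ξ, u s) = F t) →
          ∀ t ∈ Set.Icc (0:ℝ) 1,
            |β₁ * (∑ n : Fin (N + 1), B (n : ℕ) t *
                    ((1 / ((n : ℕ).factorial : ℝ)) * ∫ s in (0:ℝ)..1, iteratedDeriv (n : ℕ) u s))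
              + β₂ * (∑ m : Fin (N + 1), ∑ n : Fin (N + 1),
                    B (m : ℕ) t * Pmat N m n *
                      ((1 / ((n : ℕ).factorial : ℝ)) * ∫ s in (0:ℝ)..1, iteratedDeriv (n : ℕ) u s))
              + κ * (∑ m : Fin (N + 1), ∑ n : Fin (N + 1),
                    B (m : ℕ) t * (Pmat N ^ 2) m n *
                      ((1 / ((n : ℕ).factorial : ℝ)) * ∫ s in (0:ℝ)..1, iteratedDeriv (n : ℕ) u s))
              - (∑ n : Fin (N + 1), B (n : ℕ) t *
                    ((1 / ((n : ℕ).factorial : ℝ)) * ∫ s in (0:ℝ)..1, iteratedDeriv (n : ℕ) F s))|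
              ≤ C * (2 * Real.pi) ^ (-(N : ℤ)) := by

  refine ⟨2*G₁*|β₁| + 4*G₁*|β₂| + 6*G₁*|κ| + 2*G₂ + 1, ?_, ?_⟩
  · have h1 : 0 ≤ 2*G₁*|β₁| := mul_nonneg (by linarith) (abs_nonneg _)
    have h2 : 0 ≤ 4*G₁*|β₂| := mul_nonneg (by linarith) (abs_nonneg _)
    have h3 : 0 ≤ 6*G₁*|κ| := mul_nonneg (by linarith) (abs_nonneg _)
    linarith
  intro N hN u F hu hF hubd hFbd hode t htmem
  obtain ⟨ht0, ht1⟩ := htmem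
  have htmem' : t ∈ Set.Icc (0:ℝ) 1 := ⟨ht0, ht1⟩
  have hu' : ContDiff ℝ ((⊤:ℕ∞) : WithTop ℕ∞) u := hu.of_le (by simp)
  have hF' : ContDiff ℝ ((⊤:ℕ∞) : WithTop ℕ∞) F := hF.of_le (by simp)
  have hUcd := Iu_contDiff u hu'
  have hVcd := Iu_contDiff (Iu u) hUcd
  have hUbd := Iu_bound u hu' G₁ hubd
  have hVbd := Iu_bound (Iu u) hUcd G₁ hUbd
  have he : (0:ℝ) ≤ (2 * π)^(-(N:ℤ)) :=
    le_of_lt (zpow_pos (by positivity) _)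
  have E1 := EM_bound u G₁ hu' hubd hN htmem'
  have E2 := EM_bound (Iu u) G₁ hUcd hUbd hN htmem'
  have E3 := EM_bound (Iu (Iu u)) G₁ hVcd hVbd hN htmem'
  have E4 := EM_bound F G₂ hF' hFbd hN htmem'
  have K1 := key0 u hu' G₁ hubd hN
  have K2 := key0 (Iu u) hUcd G₁ hUbd hN
  -- abbreviations
  set e : ℝ := (2 * π)^(-(N:ℤ)) with he_def
  set Su : ℝ := ∑ n ∈ Finset.range (N+1), B n t * coeff u n with hSu_def
  set SU : ℝ := ∑ n ∈ Finset.range (N+1), B n t * coeff (Iu u) n with hSU_def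
  set SV : ℝ := ∑ n ∈ Finset.range (N+1), B n t * coeff (Iu (Iu u)) n with hSV_def
  set SF : ℝ := ∑ n ∈ Finset.range (N+1), B n t * coeff F n with hSF_def
  set ε₀ : ℝ := (∑ j ∈ Finset.range N, (-(B (j+1) 0) / ((j:ℝ)+1)) * coeff u j)
      - coeff (Iu u) 0 with hε₀_def
  set ε₁ : ℝ := (∑ j ∈ Finset.range N, (-(B (j+1) 0) / ((j:ℝ)+1)) * coeff (Iu u) j)
      - coeff (Iu (Iu u)) 0 with hε₁_def
  -- conversion of the four Fin-indexed sums
  have hS1 : (∑ n : Fin (N + 1), B (n : ℕ) t *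
        ((1 / ((n : ℕ).factorial : ℝ)) * ∫ s in (0:ℝ)..1, iteratedDeriv (n : ℕ) u s)) = Su :=
    Fin.sum_univ_eq_sum_range (fun n => B n t * coeff u n) (N+1)
  have hS4 : (∑ n : Fin (N + 1), B (n : ℕ) t *
        ((1 / ((n : ℕ).factorial : ℝ)) * ∫ s in (0:ℝ)..1, iteratedDeriv (n : ℕ) F s)) = SF :=
    Fin.sum_univ_eq_sum_range (fun n => B n t * coeff F n) (N+1)
  have hT2a : (∑ m : Fin (N + 1), ∑ n : Fin (N + 1), B (m : ℕ) t * Pmat N m n *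
        ((1 / ((n : ℕ).factorial : ℝ)) * ∫ s in (0:ℝ)..1, iteratedDeriv (n : ℕ) u s))
      = ∑ m ∈ Finset.range (N+1), ∑ n ∈ Finset.range (N+1), B m t * Pe N m n * coeff u n :=
    fin_double_conv N t (coeff u)
  have hrowFin : ∀ k : Fin (N+1),
      (∑ n : Fin (N+1), Pmat N k n * coeff u (n:ℕ)) = bfun N u (k:ℕ) := by
    intro k
    have h1 := Fin.sum_univ_eq_sum_range (fun n => Pe N (k:ℕ) n * coeff u n) (N+1)
    have h2 := Prow N (coeff u) (k:ℕ) (Nat.lt_succ_iff.mp k.isLt)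
    exact h1.trans h2
  have hT3a : (∑ m : Fin (N + 1), ∑ n : Fin (N + 1), B (m : ℕ) t * (Pmat N ^ 2) m n *
        ((1 / ((n : ℕ).factorial : ℝ)) * ∫ s in (0:ℝ)..1, iteratedDeriv (n : ℕ) u s))
      = ∑ m ∈ Finset.range (N+1), ∑ k ∈ Finset.range (N+1), B m t * Pe N m k * bfun N u k :=
    fin_sq_conv N t (coeff u) (bfun N u) hrowFin
  -- evaluate the P-sum
  have hcoeffU : ∀ j : ℕ, coeff u j / ((j:ℝ)+1) = coeff (Iu u) (j+1) := fun j =>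
    (Iu_coeff_succ u hu'.continuous j).symm
  have hcoeffV : ∀ j : ℕ, coeff (Iu u) j / ((j:ℝ)+1) = coeff (Iu (Iu u)) (j+1) := fun j =>
    (Iu_coeff_succ (Iu u) hUcd.continuous j).symm
  have hSUdecomp : SU = (∑ j ∈ Finset.range N, B (j+1) t * coeff (Iu u) (j+1))
      + coeff (Iu u) 0 := by
    rw [hSU_def, Finset.sum_range_succ', B_zero, one_mul]
  have hSVdecomp : SV = (∑ j ∈ Finset.range N, B (j+1) t * coeff (Iu (Iu u)) (j+1))
      + coeff (Iu (Iu u)) 0 := by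
    rw [hSV_def, Finset.sum_range_succ', B_zero, one_mul]
  have hT2 : (∑ m : Fin (N + 1), ∑ n : Fin (N + 1), B (m : ℕ) t * Pmat N m n *
        ((1 / ((n : ℕ).factorial : ℝ)) * ∫ s in (0:ℝ)..1, iteratedDeriv (n : ℕ) u s))
      = SU + ε₀ := by
    rw [hT2a, Psum N t (coeff u), B_zero, one_mul]
    have hc : ∀ j ∈ Finset.range N, B (j+1) t * (coeff u j / ((j:ℝ)+1))
        = B (j+1) t * coeff (Iu u) (j+1) := fun j _ => by rw [hcoeffU j]
    rw [Finset.sum_congr rfl hc, hSUdecomp, hε₀_def]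
    ring
  -- evaluate the P²-sum
  have h0N : (0:ℕ) ∈ Finset.range N := Finset.mem_range.mpr (by omega)
  have piece1 : ∑ j ∈ Finset.range N, (-(B (j+1) 0) / ((j:ℝ)+1)) * bfun N u j
      = (∑ j ∈ Finset.range N, (-(B (j+1) 0) / ((j:ℝ)+1)) * coeff (Iu u) j)
        + (1/2) * ε₀ := by
    have hptw : ∀ j ∈ Finset.range N, (-(B (j+1) 0) / ((j:ℝ)+1)) * bfun N u j
        = (-(B (j+1) 0) / ((j:ℝ)+1)) * coeff (Iu u) j
          + (if j = 0 then (1/2) * ε₀ else 0) := by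
      intro j _
      cases j with
      | zero =>
        rw [if_pos rfl, bfun_zero]
        have hc : -(B (0+1) 0) / (((0:ℕ):ℝ)+1) = 1/2 := by norm_num [B_one]
        rw [hc, hε₀_def]
        have hc0 : coeff (Iu u) 0 = coeff (Iu u) ((0:ℕ)) := rfl
        ring
      | succ i =>
        rw [if_neg (Nat.succ_ne_zero i), bfun_succ N u hu'.continuous i, add_zero]
    rw [Finset.sum_congr rfl hptw, Finset.sum_add_distrib,
      Finset.sum_ite_eq' (Finset.range N) 0 (fun _ => (1/2) * ε₀), if_pos h0N]
  have piece2 : ∑ j ∈ Finset.range N, B (j+1) t * (bfun N u j / ((j:ℝ)+1))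
      = (∑ j ∈ Finset.range N, B (j+1) t * coeff (Iu (Iu u)) (j+1))
        + B 1 t * ε₀ := by
    have hptw : ∀ j ∈ Finset.range N, B (j+1) t * (bfun N u j / ((j:ℝ)+1))
        = B (j+1) t * coeff (Iu (Iu u)) (j+1) + (if j = 0 then B 1 t * ε₀ else 0) := by
      intro j _
      cases j with
      | zero =>
        rw [if_pos rfl, bfun_zero, ← hcoeffV 0]
        rw [hε₀_def]
        push_cast
        ring
      | succ i =>
        rw [if_neg (Nat.succ_ne_zero i), bfun_succ N u hu'.continuous i, add_zero,
          hcoeffV (i+1)]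
    rw [Finset.sum_congr rfl hptw, Finset.sum_add_distrib,
      Finset.sum_ite_eq' (Finset.range N) 0 (fun _ => B 1 t * ε₀), if_pos h0N]
  have hT3 : (∑ m : Fin (N + 1), ∑ n : Fin (N + 1), B (m : ℕ) t * (Pmat N ^ 2) m n *
        ((1 / ((n : ℕ).factorial : ℝ)) * ∫ s in (0:ℝ)..1, iteratedDeriv (n : ℕ) u s))
      = SV + ε₁ + (1/2) * ε₀ + B 1 t * ε₀ := by
    rw [hT3a, Psum N t (bfun N u), B_zero, one_mul, piece1, piece2, hSVdecomp, hε₁_def]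
    ring
  -- the ODE at t
  have hODE0 : β₁ * u t + β₂ * Iu u t + κ * Iu (Iu u) t - F t = 0 := by
    have h := hode t htmem'
    have h2 : Iu u t = ∫ s in (0:ℝ)..t, u s := rfl
    have h3 : Iu (Iu u) t = ∫ ξ in (0:ℝ)..t, ∫ s in (0:ℝ)..ξ, u s := rfl
    rw [h2, h3]
    linarith
  -- assemble
  rw [hS1, hS4, hT2, hT3]
  have hfinal : β₁*Su + β₂*(SU + ε₀) + κ*(SV + ε₁ + (1/2)*ε₀ + B 1 t * ε₀) - SF
      = β₁*(Su - u t) + β₂*((SU - Iu u t) + ε₀)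
        + κ*(((SV - Iu (Iu u) t) + ε₁) + t*ε₀) - (SF - F t) := by
    rw [B_one]
    linear_combination hODE0
  rw [hfinal]
  have hd1 : |Su - u t| ≤ 2*G₁*e := by rw [abs_sub_comm]; exact E1
  have hd4 : |SF - F t| ≤ 2*G₂*e := by rw [abs_sub_comm]; exact E4
  have hd2 : |(SU - Iu u t) + ε₀| ≤ 4*G₁*e := by
    calc |(SU - Iu u t) + ε₀| ≤ |SU - Iu u t| + |ε₀| := abs_add_le _ _
      _ ≤ 2*G₁*e + 2*G₁*e := add_le_add (by rw [abs_sub_comm]; exact E2) K1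
      _ = 4*G₁*e := by ring
  have habs_t : |t| ≤ 1 := abs_le.mpr ⟨by linarith, ht1⟩
  have hd3 : |((SV - Iu (Iu u) t) + ε₁) + t*ε₀| ≤ 6*G₁*e := by
    calc |((SV - Iu (Iu u) t) + ε₁) + t*ε₀|
        ≤ |(SV - Iu (Iu u) t) + ε₁| + |t*ε₀| := abs_add_le _ _
      _ ≤ (|SV - Iu (Iu u) t| + |ε₁|) + |t| * |ε₀| := by
          rw [abs_mul]
          exact add_le_add (abs_add_le _ _) le_rfl
      _ ≤ (2*G₁*e + 2*G₁*e) + 1*(2*G₁*e) := by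
          refine add_le_add (add_le_add (by rw [abs_sub_comm]; exact E3) K2) ?_
          exact mul_le_mul habs_t K1 (abs_nonneg _) zero_le_one
      _ = 6*G₁*e := by ring
  calc |β₁*(Su - u t) + β₂*((SU - Iu u t) + ε₀)
        + κ*(((SV - Iu (Iu u) t) + ε₁) + t*ε₀) - (SF - F t)|
      ≤ |β₁*(Su - u t) + β₂*((SU - Iu u t) + ε₀)
          + κ*(((SV - Iu (Iu u) t) + ε₁) + t*ε₀)| + |SF - F t| := abs_sub _ _
    _ ≤ (|β₁*(Su - u t) + β₂*((SU - Iu u t) + ε₀)|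
          + |κ*(((SV - Iu (Iu u) t) + ε₁) + t*ε₀)|) + |SF - F t| := by
        exact add_le_add (abs_add_le _ _) le_rfl
    _ ≤ ((|β₁*(Su - u t)| + |β₂*((SU - Iu u t) + ε₀)|)
          + |κ*(((SV - Iu (Iu u) t) + ε₁) + t*ε₀)|) + |SF - F t| := by
        exact add_le_add (add_le_add (abs_add_le _ _) le_rfl) le_rfl
    _ = |β₁| * |Su - u t| + |β₂| * |(SU - Iu u t) + ε₀|
          + |κ| * |((SV - Iu (Iu u) t) + ε₁) + t*ε₀| + |SF - F t| := by
        rw [abs_mul, abs_mul, abs_mul]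
    _ ≤ |β₁| * (2*G₁*e) + |β₂| * (4*G₁*e) + |κ| * (6*G₁*e) + 2*G₂*e := by
        gcongr
    _ = (2*G₁*|β₁| + 4*G₁*|β₂| + 6*G₁*|κ| + 2*G₂)*e := by ring
    _ ≤ (2*G₁*|β₁| + 4*G₁*|β₂| + 6*G₁*|κ| + 2*G₂ + 1)*e := by
        apply mul_le_mul_of_nonneg_right (by linarith) he
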